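/- arXiv:2103.16377 — 2 statements merged into one kernel-verified Lean document; each statement's English description precedes it below -/
import Mathlib

section
/- Let (Ω, P) be a probability space and E a real inner product space. Let M ≥ 1 and let X_0, …, X_{M−1} : Ω → E be measurable random vectors with ‖X_i‖ ≤ H almost surely for a constant H ≥ 0. Suppose there are constants Λ ≥ 0 and ρ ∈ [0,1) such that for all i ≠ j one has E⟨X_i, X_j⟩ ≤ Λ ρ^{|i−j|} H². Then E‖(1/M) ∑_{i=0}^{M−1} X_i‖² ≤ (H²/M) (1 + 2Λρ/(1−ρ)). -/
open MeasureTheory Finset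
open scoped RealInnerProductSpace

/-!
Expanding the square, `E‖∑ i, X i‖²` is the sum of the correlation matrix `E⟪X i, X j⟫`.
Its diagonal entries are at most `H²`, and in each row the off-diagonal entries are dominated
by a two-sided geometric series `Λ H² ∑_{k ≠ 0} ρ^|k| = Λ H² · 2ρ/(1-ρ)`. Summing the `M` rows
and dividing by `M²` gives the bound.
-/

section GeometricWeights

variable {ρ : ℝ}

theorem hasSum_pow_natAbs (hρ0 : 0 ≤ ρ) (hρ1 : ρ < 1) :
    HasSum (fun k : ℤ => ρ ^ k.natAbs) ((1 + ρ) / (1 - ρ)) := by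
  have hpos := hasSum_geometric_of_lt_one hρ0 hρ1
  have hnatAbs : ∀ n : ℕ, ρ ^ (-((n : ℤ) + 1)).natAbs = ρ * ρ ^ n := fun n => by
    rw [Int.natAbs_neg, ← pow_succ']
    rfl
  have h := HasSum.of_nat_of_neg_add_one (f := fun k : ℤ => ρ ^ k.natAbs)
    (by simpa only [Int.natAbs_natCast] using hpos) (by simpa only [hnatAbs] using hpos.mul_left ρ)
  rwa [show (1 - ρ)⁻¹ + ρ * (1 - ρ)⁻¹ = (1 + ρ) / (1 - ρ) by ring] at h

theorem sum_pow_natAbs_le_of_zero_notMem (hρ0 : 0 ≤ ρ) (hρ1 : ρ < 1) {t : Finset ℤ}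
    (ht : 0 ∉ t) : ∑ k ∈ t, ρ ^ k.natAbs ≤ 2 * ρ / (1 - ρ) := by
  have h := sum_le_hasSum (insert 0 t) (fun k _ => pow_nonneg hρ0 _) (hasSum_pow_natAbs hρ0 hρ1)
  rw [sum_insert ht, Int.natAbs_zero, pow_zero] at h
  calc ∑ k ∈ t, ρ ^ k.natAbs ≤ (1 + ρ) / (1 - ρ) - 1 := by linarith
    _ = 2 * ρ / (1 - ρ) := by field_simp [(sub_pos.mpr hρ1).ne']; ring

theorem sum_erase_pow_natAbs_sub_le (hρ0 : 0 ≤ ρ) (hρ1 : ρ < 1) {n : ℕ} (i : Fin n) :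
    ∑ j ∈ univ.erase i, ρ ^ ((i : ℤ) - (j : ℤ)).natAbs ≤ 2 * ρ / (1 - ρ) := by
  have hinj : Set.InjOn (fun j : Fin n => (i : ℤ) - (j : ℤ)) (univ.erase i) := by
    intro j _ k _ hjk
    simp only [sub_right_inj, Nat.cast_inj] at hjk
    exact Fin.ext hjk
  rw [← sum_image (f := fun k : ℤ => ρ ^ k.natAbs) hinj]
  refine sum_pow_natAbs_le_of_zero_notMem hρ0 hρ1 ?_
  simp only [mem_image, mem_erase, mem_univ, and_true, sub_eq_zero, Nat.cast_inj, not_exists,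
    not_and]
  exact fun j hji hij => hji (Fin.ext hij.symm)

theorem sum_sum_le_of_le_geometric_offDiag {n : ℕ} (c : Fin n → Fin n → ℝ) {D Λ : ℝ}
    (hD : 0 ≤ D) (hΛ : 0 ≤ Λ) (hρ0 : 0 ≤ ρ) (hρ1 : ρ < 1) (hdiag : ∀ i, c i i ≤ D)
    (hoff : ∀ i j, i ≠ j → c i j ≤ Λ * ρ ^ ((i : ℤ) - (j : ℤ)).natAbs * D) :
    ∑ i, ∑ j, c i j ≤ n * (D * (1 + 2 * Λ * ρ / (1 - ρ))) := by
  have hrow : ∀ i, ∑ j, c i j ≤ D * (1 + 2 * Λ * ρ / (1 - ρ)) := by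
    intro i
    have hoff_sum : ∑ j ∈ univ.erase i, c i j ≤ Λ * D * (2 * ρ / (1 - ρ)) :=
      calc ∑ j ∈ univ.erase i, c i j
          ≤ ∑ j ∈ univ.erase i, Λ * D * ρ ^ ((i : ℤ) - (j : ℤ)).natAbs :=
            sum_le_sum fun j hj => by linarith [hoff i j (ne_of_mem_erase hj).symm]
        _ ≤ Λ * D * (2 * ρ / (1 - ρ)) := by
            rw [← mul_sum]
            exact mul_le_mul_of_nonneg_left (sum_erase_pow_natAbs_sub_le hρ0 hρ1 i)
              (mul_nonneg hΛ hD)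
    rw [← add_sum_erase _ _ (mem_univ i)]
    calc c i i + ∑ j ∈ univ.erase i, c i j ≤ D + Λ * D * (2 * ρ / (1 - ρ)) :=
          add_le_add (hdiag i) hoff_sum
      _ = D * (1 + 2 * Λ * ρ / (1 - ρ)) := by ring
  simpa using sum_le_sum fun i (_ : i ∈ univ) => hrow i

end GeometricWeights

section SecondMoment

variable {Ω E : Type*} [MeasurableSpace Ω] {P : Measure Ω}
  [NormedAddCommGroup E] [InnerProductSpace ℝ E]

theorem integrable_inner_of_ae_norm_le [IsFiniteMeasure P] {X Y : Ω → E} {H : ℝ}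
    (hX : AEStronglyMeasurable X P) (hY : AEStronglyMeasurable Y P)
    (hXH : ∀ᵐ ω ∂P, ‖X ω‖ ≤ H) (hYH : ∀ᵐ ω ∂P, ‖Y ω‖ ≤ H) :
    Integrable (fun ω => ⟪X ω, Y ω⟫) P := by
  refine (integrable_const (H ^ 2)).mono' (hX.inner hY) ?_
  filter_upwards [hXH, hYH] with ω hx hy
  calc ‖⟪X ω, Y ω⟫‖ ≤ ‖X ω‖ * ‖Y ω‖ := norm_inner_le_norm _ _
    _ ≤ H * H := mul_le_mul hx hy (norm_nonneg _) ((norm_nonneg _).trans hx)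
    _ = H ^ 2 := (sq H).symm

theorem integral_inner_self_le_of_ae_norm_le [IsProbabilityMeasure P] {X : Ω → E} {H : ℝ}
    (hXH : ∀ᵐ ω ∂P, ‖X ω‖ ≤ H) : ∫ ω, ⟪X ω, X ω⟫ ∂P ≤ H ^ 2 := by
  have h := integral_mono_of_nonneg (ae_of_all _ fun ω => real_inner_self_nonneg (x := X ω))
    (integrable_const (H ^ 2)) (by
      filter_upwards [hXH] with ω hx
      rw [real_inner_self_eq_norm_sq]
      exact pow_le_pow_left₀ (norm_nonneg _) hx 2)
  simpa using h

theorem integral_norm_sum_sq {ι : Type*} [Fintype ι] {X : ι → Ω → E}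
    (hint : ∀ i j, Integrable (fun ω => ⟪X i ω, X j ω⟫) P) :
    ∫ ω, ‖∑ i, X i ω‖ ^ 2 ∂P = ∑ i, ∑ j, ∫ ω, ⟪X i ω, X j ω⟫ ∂P := by
  simp_rw [← real_inner_self_eq_norm_sq, sum_inner, inner_sum]
  rw [integral_finsetSum _ fun i _ => integrable_finsetSum _ fun j _ => hint i j]
  exact sum_congr rfl fun i _ => integral_finsetSum _ fun j _ => hint i j

end SecondMoment

theorem batch_second_moment_bound_general
    {Ω : Type*} [MeasurableSpace Ω] (P : Measure Ω) [IsProbabilityMeasure P]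
    {E : Type*} [NormedAddCommGroup E] [InnerProductSpace ℝ E]
    (M : ℕ)
    (X : Fin M → Ω → E)
    (hXmeas : ∀ i, AEStronglyMeasurable (X i) P)
    (H : ℝ)
    (hXbd : ∀ i, ∀ᵐ ω ∂P, ‖X i ω‖ ≤ H)
    (Λ ρ : ℝ) (hΛ : 0 ≤ Λ) (hρ0 : 0 ≤ ρ) (hρ1 : ρ < 1)
    (hcorr : ∀ i j : Fin M, i ≠ j →
      ∫ ω, ⟪X i ω, X j ω⟫ ∂P ≤ Λ * ρ ^ ((i : ℤ) - (j : ℤ)).natAbs * H ^ 2) :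
    ∫ ω, ‖(M : ℝ)⁻¹ • (∑ i, X i ω)‖ ^ 2 ∂P
      ≤ (H ^ 2 / M) * (1 + 2 * Λ * ρ / (1 - ρ)) := by
  have hint : ∀ i j, Integrable (fun ω => ⟪X i ω, X j ω⟫) P := fun i j =>
    integrable_inner_of_ae_norm_le (hXmeas i) (hXmeas j) (hXbd i) (hXbd j)
  have hcov := sum_sum_le_of_le_geometric_offDiag (fun i j => ∫ ω, ⟪X i ω, X j ω⟫ ∂P)
    (sq_nonneg H) hΛ hρ0 hρ1 (fun i => integral_inner_self_le_of_ae_norm_le (hXbd i)) hcorr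
  calc ∫ ω, ‖(M : ℝ)⁻¹ • (∑ i, X i ω)‖ ^ 2 ∂P
      = (M : ℝ)⁻¹ ^ 2 * ∫ ω, ‖∑ i, X i ω‖ ^ 2 ∂P := by
        simp_rw [norm_smul, mul_pow, Real.norm_eq_abs, sq_abs]
        exact integral_const_mul _ _
    _ = (M : ℝ)⁻¹ ^ 2 * ∑ i, ∑ j, ∫ ω, ⟪X i ω, X j ω⟫ ∂P := by rw [integral_norm_sum_sq hint]
    _ ≤ (M : ℝ)⁻¹ ^ 2 * (M * (H ^ 2 * (1 + 2 * Λ * ρ / (1 - ρ)))) := by gcongr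
    _ = (H ^ 2 / M) * (1 + 2 * Λ * ρ / (1 - ρ)) := by
        rcases eq_or_ne (M : ℝ) 0 with hM | hM
        · simp [hM]
        · field_simp

/-- Second-moment bound for a batch average of bounded random vectors whose
cross-correlations decay geometrically: if `‖X i‖ ≤ H` a.s. and
`E⟪X i, X j⟫ ≤ Λ ρ^{|i-j|} H²` for `i ≠ j`, then
`E‖(1/M) ∑ X i‖² ≤ (H²/M)(1 + 2Λρ/(1−ρ))`. -/
theorem batch_second_moment_bound
    {Ω : Type*} [MeasurableSpace Ω] (P : Measure Ω) [IsProbabilityMeasure P]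
    {E : Type*} [NormedAddCommGroup E] [InnerProductSpace ℝ E]
    (M : ℕ) (hM : 1 ≤ M)
    (X : Fin M → Ω → E)
    (hXmeas : ∀ i, AEStronglyMeasurable (X i) P)
    (H : ℝ) (hH : 0 ≤ H)
    (hXbd : ∀ i, ∀ᵐ ω ∂P, ‖X i ω‖ ≤ H)
    (Λ ρ : ℝ) (hΛ : 0 ≤ Λ) (hρ0 : 0 ≤ ρ) (hρ1 : ρ < 1)
    (hcorr : ∀ i j : Fin M, i ≠ j →
      ∫ ω, ⟪X i ω, X j ω⟫ ∂P ≤ Λ * ρ ^ ((i : ℤ) - (j : ℤ)).natAbs * H ^ 2) :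
    ∫ ω, ‖(M : ℝ)⁻¹ • (∑ i, X i ω)‖ ^ 2 ∂P
      ≤ (H ^ 2 / M) * (1 + 2 * Λ * ρ / (1 - ρ)) :=
  batch_second_moment_bound_general P M X hXmeas H hXbd Λ ρ hΛ hρ0 hρ1 hcorr
end

section
/- Let (Ω, P) be a probability space, let Θ = ℝ^p and W = ℝ^q (Euclidean), and let M ≥ 1. For each t ∈ {0,…,M−1} let K_t : Ω → Θ → W → ℝ^q be measurable, and let θ, θ̃ : Ω → Θ and w, w̃ : Ω → W be random variables; let ω* : Θ → W be measurable. Assume constants L₄, L₅, C₂ ≥ 0 such that: (i) for every sample point, every t, every x ∈ Θ and y, y' ∈ W, ‖K_t(·, x, y) − K_t(·, x, y')‖ ≤ L₄ ‖y − y'‖; (ii) for every sample point, every t and x, x' ∈ Θ, ‖K_t(·, x, ω*(x)) − K_t(·, x', ω*(x'))‖ ≤ L₅ ‖x − x'‖; (iii) E‖(1/M) ∑_{s=0}^{M−1} K_s(·, θ̃, ω*(θ̃))‖² ≤ C₂/M. Fix t and define the random vector h := K_t(·, θ, w) − K_t(·, θ̃, w̃) + (1/M) ∑_{s=0}^{M−1}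 K_s(·, θ̃, w̃). Then, assuming all the squared norms appearing below are integrable, E‖h‖² ≤ 6 L₄² E‖w − ω*(θ)‖² + 9 L₄² E‖w̃ − ω*(θ̃)‖² + 6 L₅² E‖θ − θ̃‖² + 6 C₂/M. -/
/-!
Let `G` be the reference batch pseudo-gradient at `(θ̃, ω*(θ̃))`. Pointwise,
`h − G = [K_t(θ, w) − K_t(θ, ω*θ)] + [K_t(θ, ω*θ) − K_t(θ̃, ω*θ̃)] + [K_t(θ̃, ω*θ̃) − K_t(θ̃, w̃)]
  + [mean_s K_s(θ̃, w̃) − mean_s K_s(θ̃, ω*θ̃)]`,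
and the four brackets are bounded by `L₄‖w − ω*θ‖`, `L₅‖θ − θ̃‖`, `L₄‖w̃ − ω*θ̃‖` and again
`L₄‖w̃ − ω*θ̃‖`. Squaring `‖h‖ ≤ ‖h − G‖ + ‖G‖` by a weighted Cauchy–Schwarz inequality and
integrating gives the bound, with (iii) controlling `E‖G‖²`. For this `‖G‖²` must be integrable
(otherwise its Bochner integral is `0`): `G` is measurable since each `x ↦ K_s(x, ω*(x))` is
continuous (a Carathéodory function composed with `θ̃`), and `‖G‖ ≤ ‖h‖ + ‖h − G‖` dominates it.
-/

open MeasureTheory Filter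

theorem aestronglyMeasurable_comp_of_continuous_of_aestronglyMeasurable
    {Ω X E : Type*} [MeasurableSpace Ω] {P : Measure Ω}
    [TopologicalSpace X] [TopologicalSpace.MetrizableSpace X] [MeasurableSpace X]
    [SecondCountableTopology X] [BorelSpace X]
    [TopologicalSpace E] [TopologicalSpace.PseudoMetrizableSpace E] [Zero E]
    {G : Ω → X → E} (hG_meas : ∀ x, AEStronglyMeasurable (fun ω => G ω x) P)
    (hG_cont : ∀ ω, Continuous (G ω)) {θ : Ω → X} (hθ : AEStronglyMeasurable θ P) :
    AEStronglyMeasurable (fun ω => G ω (θ ω)) P := by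
  -- `G` admits a jointly strongly measurable version: fix versions on the countable set `C`
  -- of values of simple approximations of the identity, then pass to the limit in `x`.
  set T := (stronglyMeasurable_id (α := X)).approx
  set C := ⋃ n, ((T n).range : Set X)
  have hT_mem : ∀ n x, T n x ∈ C := fun n x =>
    Set.mem_iUnion.2 ⟨n, Finset.mem_coe.2 ((T n).mem_range_self x)⟩
  have hC : C.Countable := Set.countable_iUnion fun n => (T n).range.countable_toSet
  obtain ⟨S, hS, hS_meas, hS_good⟩ :=
    ((ae_ball_iff hC).2 fun c _ => (hG_meas c).ae_eq_mk).exists_measurable_mem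
  set u : X → Ω → E := fun x => S.indicator fun ω => G ω x
  have hu_cont : ∀ ω, Continuous fun x => u x ω := by
    intro ω
    by_cases hω : ω ∈ S
    · simpa [u, hω] using hG_cont ω
    · simpa [u, hω] using continuous_const
  have hu_C : ∀ c ∈ C, StronglyMeasurable (u c) := by
    intro c hc
    have : u c = S.indicator ((hG_meas c).mk _) :=
      Set.indicator_congr fun ω hω => hS_good ω hω c hc
    exact this ▸ (hG_meas c).stronglyMeasurable_mk.indicator hS_meas
  have hu : ∀ x, StronglyMeasurable (u x) := fun x =>
    stronglyMeasurable_of_tendsto atTop (fun n => hu_C _ (hT_mem n x))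
      (tendsto_pi_nhds.2 fun ω => ((hu_cont ω).tendsto x).comp
        ((stronglyMeasurable_id (α := X)).tendsto_approx x))
  refine ⟨fun ω => u (hθ.mk θ ω) ω,
    (stronglyMeasurable_uncurry_of_continuous_of_stronglyMeasurable hu_cont hu).comp_measurable
      (hθ.measurable_mk.prodMk measurable_id), ?_⟩
  filter_upwards [hS, hθ.ae_eq_mk] with ω hω hθω
  simp [u, hω, hθω]

section Pointwise

variable {ι X Y F : Type*} [Fintype ι] [SeminormedAddCommGroup X] [SeminormedAddCommGroup Y]
  [SeminormedAddCommGroup F] [NormedSpace ℝ F]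

theorem norm_mean_sub_mean_le [Nonempty ι] {f g : ι → F} {r : ℝ}
    (hfg : ∀ i, ‖f i - g i‖ ≤ r) :
    ‖(Fintype.card ι : ℝ)⁻¹ • ∑ i, f i - (Fintype.card ι : ℝ)⁻¹ • ∑ i, g i‖ ≤ r := by
  have hcard : (0 : ℝ) < Fintype.card ι := Nat.cast_pos.2 Fintype.card_pos
  rw [← smul_sub, ← Finset.sum_sub_distrib, norm_smul, Real.norm_of_nonneg (by positivity),
    inv_mul_le_iff₀ hcard]
  simpa using norm_sum_le_of_le Finset.univ fun i _ => hfg i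

theorem norm_varianceReducedUpdate_sub_mean_le (K : ι → X → Y → F) (ystar : X → Y) {L₄ L₅ : ℝ}
    (hlip₄ : ∀ i x y y', ‖K i x y - K i x y'‖ ≤ L₄ * ‖y - y'‖)
    (hlip₅ : ∀ i x x', ‖K i x (ystar x) - K i x' (ystar x')‖ ≤ L₅ * ‖x - x'‖)
    (t : ι) (x x' : X) (y y' : Y) :
    ‖K t x y - K t x' y' + (Fintype.card ι : ℝ)⁻¹ • ∑ i, K i x' y'
        - (Fintype.card ι : ℝ)⁻¹ • ∑ i, K i x' (ystar x')‖
      ≤ L₄ * ‖y - ystar x‖ + L₅ * ‖x - x'‖ + 2 * (L₄ * ‖y' - ystar x'‖) := by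
  have : Nonempty ι := ⟨t⟩
  have h₃ : ‖K t x' (ystar x') - K t x' y'‖ ≤ L₄ * ‖y' - ystar x'‖ := by
    rw [norm_sub_rev y']
    exact hlip₄ t x' _ _
  calc _ = ‖(K t x y - K t x (ystar x)) + (K t x (ystar x) - K t x' (ystar x'))
          + (K t x' (ystar x') - K t x' y')
          + ((Fintype.card ι : ℝ)⁻¹ • ∑ i, K i x' y'
            - (Fintype.card ι : ℝ)⁻¹ • ∑ i, K i x' (ystar x'))‖ := by
        congr 1
        abel
    _ ≤ L₄ * ‖y - ystar x‖ + L₅ * ‖x - x'‖ + L₄ * ‖y' - ystar x'‖ + L₄ * ‖y' - ystar x'‖ :=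
        norm_add₄_le.trans <| add_le_add (add_le_add (add_le_add (hlip₄ t x y _) (hlip₅ t x x'))
          h₃) (norm_mean_sub_mean_le fun i => hlip₄ i x' y' _)
    _ = _ := by ring

end Pointwise

-- Cauchy–Schwarz with weights `6, 6, 9/4, 6`, whose reciprocals sum to `17/18 ≤ 1`.
theorem sq_le_of_le_add_add_two_mul_add {x a b c d : ℝ} (hx : 0 ≤ x)
    (h : x ≤ a + b + 2 * c + d) :
    x ^ 2 ≤ 6 * a ^ 2 + 6 * b ^ 2 + 9 * c ^ 2 + 6 * d ^ 2 :=
  calc x ^ 2 ≤ (a + b + 2 * c + d) ^ 2 := pow_le_pow_left₀ hx h 2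
    _ ≤ _ := by
      nlinarith [sq_nonneg (a - b), sq_nonneg (a - d), sq_nonneg (b - d),
        sq_nonneg (3 * a - 2 * c), sq_nonneg (3 * b - 2 * c), sq_nonneg (3 * d - 2 * c)]

section Integral

variable {Ω : Type*} [MeasurableSpace Ω] {P : Measure Ω} {f a b c d : Ω → ℝ}

theorem integrable_sq_of_le_add_add_two_mul_add (hf : ∀ ω, 0 ≤ f ω)
    (hle : ∀ ω, f ω ≤ a ω + b ω + 2 * c ω + d ω) (hf_meas : AEStronglyMeasurable f P)
    (ha : Integrable (fun ω => a ω ^ 2) P) (hb : Integrable (fun ω => b ω ^ 2) P)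
    (hc : Integrable (fun ω => c ω ^ 2) P) (hd : Integrable (fun ω => d ω ^ 2) P) :
    Integrable (fun ω => f ω ^ 2) P := by
  refine Integrable.mono' (g := fun ω => 6 * a ω ^ 2 + 6 * b ω ^ 2 + 9 * c ω ^ 2 + 6 * d ω ^ 2)
    (by fun_prop) (hf_meas.pow 2) (ae_of_all _ fun ω => ?_)
  rw [Real.norm_of_nonneg (sq_nonneg _)]
  exact sq_le_of_le_add_add_two_mul_add (hf ω) (hle ω)

theorem integral_sq_le_of_le_add_add_two_mul_add (hf : ∀ ω, 0 ≤ f ω)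
    (hle : ∀ ω, f ω ≤ a ω + b ω + 2 * c ω + d ω) (hf_int : Integrable (fun ω => f ω ^ 2) P)
    (ha : Integrable (fun ω => a ω ^ 2) P) (hb : Integrable (fun ω => b ω ^ 2) P)
    (hc : Integrable (fun ω => c ω ^ 2) P) (hd : Integrable (fun ω => d ω ^ 2) P) :
    ∫ ω, f ω ^ 2 ∂P ≤ 6 * ∫ ω, a ω ^ 2 ∂P + 6 * ∫ ω, b ω ^ 2 ∂P + 9 * ∫ ω, c ω ^ 2 ∂P
      + 6 * ∫ ω, d ω ^ 2 ∂P :=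
  calc ∫ ω, f ω ^ 2 ∂P
      ≤ ∫ ω, (6 * a ω ^ 2 + 6 * b ω ^ 2 + 9 * c ω ^ 2 + 6 * d ω ^ 2) ∂P :=
        integral_mono hf_int (by fun_prop) fun ω => sq_le_of_le_add_add_two_mul_add (hf ω) (hle ω)
    _ = _ := by
      rw [integral_add (by fun_prop) (by fun_prop), integral_add (by fun_prop) (by fun_prop),
        integral_add (by fun_prop) (by fun_prop)]
      simp only [integral_const_mul]

end Integral

theorem critic_update_second_moment_bound_general
    {Ω : Type*} [MeasurableSpace Ω] (P : Measure Ω)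
    (p q : ℕ) (M : ℕ)
    (K : Fin M → Ω → EuclideanSpace ℝ (Fin p) → EuclideanSpace ℝ (Fin q) →
      EuclideanSpace ℝ (Fin q))
    (θ θt : Ω → EuclideanSpace ℝ (Fin p)) (w wt : Ω → EuclideanSpace ℝ (Fin q))
    (ωstar : EuclideanSpace ℝ (Fin p) → EuclideanSpace ℝ (Fin q))
    (hKmeas : ∀ t x y, AEStronglyMeasurable (fun ω => K t ω x y) P)
    (hθtmeas : AEStronglyMeasurable θt P)
    (L₄ L₅ C₂ : ℝ)
    -- (i) Lipschitz continuity in the critic variable, per sample point: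
    (hlip₄ : ∀ ω : Ω, ∀ t : Fin M, ∀ (x : EuclideanSpace ℝ (Fin p))
      (y y' : EuclideanSpace ℝ (Fin q)), ‖K t ω x y - K t ω x y'‖ ≤ L₄ * ‖y - y'‖)
    -- (ii) Lipschitz continuity of `x ↦ K t (x, ω*(x))`, per sample point:
    (hlip₅ : ∀ ω : Ω, ∀ t : Fin M, ∀ x x' : EuclideanSpace ℝ (Fin p),
      ‖K t ω x (ωstar x) - K t ω x' (ωstar x')‖ ≤ L₅ * ‖x - x'‖)
    -- (iii) second-moment bound of the reference batch pseudo-gradient: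
    (hvar : ∫ ω, ‖(M : ℝ)⁻¹ • ∑ s, K s ω (θt ω) (ωstar (θt ω))‖ ^ 2 ∂P ≤ C₂ / M)
    (t : Fin M)
    (h : Ω → EuclideanSpace ℝ (Fin q))
    (hh : ∀ ω, h ω = K t ω (θ ω) (w ω) - K t ω (θt ω) (wt ω)
      + (M : ℝ)⁻¹ • ∑ s, K s ω (θt ω) (wt ω))
    -- integrability of all the squared norms appearing below:
    (hint_h : Integrable (fun ω => ‖h ω‖ ^ 2) P)
    (hint₁ : Integrable (fun ω => ‖w ω - ωstar (θ ω)‖ ^ 2) P)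
    (hint₂ : Integrable (fun ω => ‖wt ω - ωstar (θt ω)‖ ^ 2) P)
    (hint₃ : Integrable (fun ω => ‖θ ω - θt ω‖ ^ 2) P) :
    ∫ ω, ‖h ω‖ ^ 2 ∂P
      ≤ 6 * L₄ ^ 2 * ∫ ω, ‖w ω - ωstar (θ ω)‖ ^ 2 ∂P
        + 9 * L₄ ^ 2 * ∫ ω, ‖wt ω - ωstar (θt ω)‖ ^ 2 ∂P
        + 6 * L₅ ^ 2 * ∫ ω, ‖θ ω - θt ω‖ ^ 2 ∂P
        + 6 * C₂ / M := by
  set G : Ω → EuclideanSpace ℝ (Fin q) :=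
    fun ω => (M : ℝ)⁻¹ • ∑ s, K s ω (θt ω) (ωstar (θt ω))
  have hdev : ∀ ω, ‖h ω - G ω‖ ≤ L₄ * ‖w ω - ωstar (θ ω)‖ + L₅ * ‖θ ω - θt ω‖
      + 2 * (L₄ * ‖wt ω - ωstar (θt ω)‖) := fun ω => by
    simpa only [hh ω, Fintype.card_fin] using norm_varianceReducedUpdate_sub_mean_le
      (fun s => K s ω) ωstar (hlip₄ ω) (hlip₅ ω) t (θ ω) (θt ω) (w ω) (wt ω)
  have hG_meas : AEStronglyMeasurable G P :=
    (Finset.aestronglyMeasurable_fun_sum _ fun s _ =>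
      aestronglyMeasurable_comp_of_continuous_of_aestronglyMeasurable
        (G := fun ω x => K s ω x (ωstar x)) (fun x => hKmeas s x _)
        (fun ω => (LipschitzWith.of_dist_le' fun x x' => by
          simpa only [dist_eq_norm] using hlip₅ ω s x x').continuous) hθtmeas).fun_const_smul _
  have hsq : ∀ {g : Ω → ℝ} (L : ℝ), Integrable (fun ω => g ω ^ 2) P →
      Integrable (fun ω => (L * g ω) ^ 2) P := fun L hg => by
    simpa only [mul_pow] using hg.const_mul (L ^ 2)
  have hG_int : Integrable (fun ω => ‖G ω‖ ^ 2) P :=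
    integrable_sq_of_le_add_add_two_mul_add (fun ω => norm_nonneg _)
      (fun ω => by linarith [norm_le_norm_add_norm_sub (h ω) (G ω), hdev ω])
      hG_meas.norm hint_h (hsq L₄ hint₁) (hsq L₄ hint₂) (hsq L₅ hint₃)
  have hbound := integral_sq_le_of_le_add_add_two_mul_add (fun ω => norm_nonneg _)
    (fun ω => by linarith [norm_le_norm_sub_add (h ω) (G ω), hdev ω])
    hint_h (hsq L₄ hint₁) (hsq L₅ hint₃) (hsq L₄ hint₂) hG_int
  have hvar' : ∫ ω, ‖G ω‖ ^ 2 ∂P ≤ C₂ / M := hvar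
  simp only [mul_pow, integral_const_mul] at hbound
  rw [mul_div_assoc]
  linarith

/-- Second-moment bound for the variance-reduced critic update
`h = K t (θ, w) − K t (θ̃, w̃) + (1/M) ∑ₛ K s (θ̃, w̃)` (the paper's Lemma 4). -/
theorem critic_update_second_moment_bound
    {Ω : Type*} [MeasurableSpace Ω] (P : Measure Ω) [IsProbabilityMeasure P]
    (p q : ℕ) (M : ℕ) (hM : 1 ≤ M)
    (K : Fin M → Ω → EuclideanSpace ℝ (Fin p) → EuclideanSpace ℝ (Fin q) →
      EuclideanSpace ℝ (Fin q))
    (θ θt : Ω → EuclideanSpace ℝ (Fin p)) (w wt : Ω → EuclideanSpace ℝ (Fin q))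
    (ωstar : EuclideanSpace ℝ (Fin p) → EuclideanSpace ℝ (Fin q))
    (hKmeas : ∀ t x y, AEStronglyMeasurable (fun ω => K t ω x y) P)
    (hθmeas : AEStronglyMeasurable θ P) (hθtmeas : AEStronglyMeasurable θt P)
    (hwmeas : AEStronglyMeasurable w P) (hwtmeas : AEStronglyMeasurable wt P)
    (hωstar : Measurable ωstar)
    (L₄ L₅ C₂ : ℝ) (hL₄ : 0 ≤ L₄) (hL₅ : 0 ≤ L₅) (hC₂ : 0 ≤ C₂)
    -- (i) Lipschitz continuity in the critic variable, per sample point: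
    (hlip₄ : ∀ ω : Ω, ∀ t : Fin M, ∀ (x : EuclideanSpace ℝ (Fin p))
      (y y' : EuclideanSpace ℝ (Fin q)), ‖K t ω x y - K t ω x y'‖ ≤ L₄ * ‖y - y'‖)
    -- (ii) Lipschitz continuity of `x ↦ K t (x, ω*(x))`, per sample point:
    (hlip₅ : ∀ ω : Ω, ∀ t : Fin M, ∀ x x' : EuclideanSpace ℝ (Fin p),
      ‖K t ω x (ωstar x) - K t ω x' (ωstar x')‖ ≤ L₅ * ‖x - x'‖)
    -- (iii) second-moment bound of the reference batch pseudo-gradient: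
    (hvar : ∫ ω, ‖(M : ℝ)⁻¹ • ∑ s, K s ω (θt ω) (ωstar (θt ω))‖ ^ 2 ∂P ≤ C₂ / M)
    (t : Fin M)
    (h : Ω → EuclideanSpace ℝ (Fin q))
    (hh : ∀ ω, h ω = K t ω (θ ω) (w ω) - K t ω (θt ω) (wt ω)
      + (M : ℝ)⁻¹ • ∑ s, K s ω (θt ω) (wt ω))
    -- integrability of all the squared norms appearing below:
    (hint_h : Integrable (fun ω => ‖h ω‖ ^ 2) P)
    (hint₁ : Integrable (fun ω => ‖w ω - ωstar (θ ω)‖ ^ 2) P)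
    (hint₂ : Integrable (fun ω => ‖wt ω - ωstar (θt ω)‖ ^ 2) P)
    (hint₃ : Integrable (fun ω => ‖θ ω - θt ω‖ ^ 2) P) :
    ∫ ω, ‖h ω‖ ^ 2 ∂P
      ≤ 6 * L₄ ^ 2 * ∫ ω, ‖w ω - ωstar (θ ω)‖ ^ 2 ∂P
        + 9 * L₄ ^ 2 * ∫ ω, ‖wt ω - ωstar (θt ω)‖ ^ 2 ∂P
        + 6 * L₅ ^ 2 * ∫ ω, ‖θ ω - θt ω‖ ^ 2 ∂P
        + 6 * C₂ / M :=
  critic_update_second_moment_bound_general P p q M K θ θt w wt ωstar hKmeas hθtmeas L₄ L₅ C₂ hlip₄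
    hlip₅ hvar t h hh hint_h hint₁ hint₂ hint₃
end
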